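/- arXiv:2110.00996 — 5 statements merged into one kernel-verified Lean document; each statement's English description precedes it below -/
import Mathlib

section
/- With f(t, b) = exp(t·b − (μ − N σ²) t / (1 + σ² t)) / (1 + σ² t)^N, N ≥ 1, σ² > 0, 0 ≤ N σ² ≤ μ: if b ≥ μ then f(t, b) is strictly increasing in t on (0, ∞), and hence inf_{t>0} f(t, b) = lim_{t→0⁺} f(t, b) = 1. -/
open Real Set Filter Topology

/-- If b ≥ μ then the Chernoff function t ↦ f(t,b) is strictly increasing on (0,∞),
tends to 1 as t → 0⁺, and hence its infimum over t > 0 is 1. -/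
theorem stmt_4 (N : ℕ) (hN : 1 ≤ N) (σ2 μ b : ℝ) (hσ : 0 < σ2)
    (hμ0 : 0 ≤ (N : ℝ) * σ2) (hμ : (N : ℝ) * σ2 ≤ μ) (hb : μ ≤ b) :
    StrictMonoOn
        (fun t : ℝ =>
          Real.exp (t * b - (μ - (N : ℝ) * σ2) * t / (1 + σ2 * t)) / (1 + σ2 * t) ^ N)
        (Set.Ioi 0) ∧
      Tendsto
        (fun t : ℝ =>
          Real.exp (t * b - (μ - (N : ℝ) * σ2) * t / (1 + σ2 * t)) / (1 + σ2 * t) ^ N)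
        (nhdsWithin 0 (Set.Ioi 0)) (nhds 1) ∧
      IsGLB
        ((fun t : ℝ =>
            Real.exp (t * b - (μ - (N : ℝ) * σ2) * t / (1 + σ2 * t)) / (1 + σ2 * t) ^ N) ''
          Set.Ioi 0)
        1 := by
  set c : ℝ := μ - (N : ℝ) * σ2 with hc
  have hc0 : 0 ≤ c := by simp [hc]; linarith
  set F : ℝ → ℝ := fun t =>
    Real.exp (t * b - c * t / (1 + σ2 * t)) / (1 + σ2 * t) ^ N with hF
  set g : ℝ → ℝ := fun t =>
    t * b - c * t / (1 + σ2 * t) - (N : ℝ) * Real.log (1 + σ2 * t) with hg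
  have hden : ∀ t : ℝ, 0 < t → 0 < 1 + σ2 * t := by
    intro t ht; nlinarith
  -- F = exp ∘ g on Ioi 0
  have hFeq : ∀ t : ℝ, 0 < t → F t = Real.exp (g t) := by
    intro t ht
    have hu := hden t ht
    simp only [hF, hg, Real.exp_sub, Real.exp_nat_mul, Real.exp_log hu]
  -- derivative of g
  have hderiv : ∀ t : ℝ, 0 < t →
      HasDerivAt g (b - c / (1 + σ2 * t) ^ 2 - (N : ℝ) * σ2 / (1 + σ2 * t)) t := by
    intro t ht
    have hu := hden t ht
    have h1 : HasDerivAt (fun t : ℝ => 1 + σ2 * t) σ2 t := by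
      simpa using ((hasDerivAt_id t).const_mul σ2).const_add 1
    have h2 : HasDerivAt (fun t : ℝ => c * t) c t := by
      simpa using (hasDerivAt_id t).const_mul c
    have hdiv : HasDerivAt (fun t : ℝ => c * t / (1 + σ2 * t))
        ((c * (1 + σ2 * t) - c * t * σ2) / (1 + σ2 * t) ^ 2) t := h2.div h1 hu.ne'
    have hlog : HasDerivAt (fun t : ℝ => (N : ℝ) * Real.log (1 + σ2 * t))
        ((N : ℝ) * (σ2 / (1 + σ2 * t))) t := (h1.log hu.ne').const_mul _
    have hmul : HasDerivAt (fun t : ℝ => t * b) b t := by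
      simpa using (hasDerivAt_id t).mul_const b
    have := (hmul.sub hdiv).sub hlog
    refine HasDerivAt.congr_deriv this ?_
    rw [show c * (1 + σ2 * t) - c * t * σ2 = c from by ring]
    ring
  -- positivity of derivative
  have hpos : ∀ t : ℝ, 0 < t →
      0 < b - c / (1 + σ2 * t) ^ 2 - (N : ℝ) * σ2 / (1 + σ2 * t) := by
    intro t ht
    have hu : 1 < 1 + σ2 * t := by nlinarith
    have hu0 : (0:ℝ) < 1 + σ2 * t := by linarith
    have h1 : c / (1 + σ2 * t) ^ 2 ≤ c := by
      apply div_le_self hc0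
      nlinarith
    have hN0 : 0 < (N : ℝ) * σ2 := by
      have : (1:ℝ) ≤ (N : ℝ) := by exact_mod_cast hN
      nlinarith
    have h2 : (N : ℝ) * σ2 / (1 + σ2 * t) < (N : ℝ) * σ2 := div_lt_self hN0 hu
    have : c + (N : ℝ) * σ2 = μ := by simp [hc]
    linarith
  -- g strictly monotone on Ioi 0
  have hgmono : StrictMonoOn g (Set.Ioi 0) := by
    apply strictMonoOn_of_deriv_pos (convex_Ioi 0)
    · intro t ht
      exact ((hderiv t ht).continuousAt).continuousWithinAt
    · intro t ht
      rw [interior_Ioi] at ht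
      rw [(hderiv t ht).deriv]
      exact hpos t ht
  have hFmono : StrictMonoOn F (Set.Ioi 0) := by
    intro x hx y hy hxy
    rw [hFeq x hx, hFeq y hy]
    exact Real.exp_lt_exp.mpr (hgmono hx hy hxy)
  -- continuity at 0 and limit
  have hdenc : ContinuousAt (fun t : ℝ => 1 + σ2 * t) 0 := by fun_prop
  have hd0 : (1 : ℝ) + σ2 * 0 ≠ 0 := by norm_num
  have hnum : ContinuousAt (fun t : ℝ => t * b - c * t / (1 + σ2 * t)) 0 :=
    (continuousAt_id.mul continuousAt_const).sub
      ((continuousAt_const.mul continuousAt_id).div hdenc hd0)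
  have hFc : ContinuousAt F 0 := by
    apply ContinuousAt.div
    · exact Real.continuous_exp.continuousAt.comp hnum
    · exact hdenc.pow N
    · simp
  have hF0 : F 0 = 1 := by simp [hF]
  have htend : Tendsto F (nhdsWithin 0 (Set.Ioi 0)) (nhds 1) := by
    have : Tendsto F (nhdsWithin 0 (Set.Ioi 0)) (nhds (F 0)) :=
      hFc.tendsto.mono_left nhdsWithin_le_nhds
    rwa [hF0] at this
  refine ⟨hFmono, htend, ?_, ?_⟩
  · rintro x ⟨t, ht, rfl⟩
    refine le_of_tendsto htend ?_
    filter_upwards [Ioo_mem_nhdsGT_of_mem (Set.mem_Ico.mpr ⟨le_refl 0, ht⟩)] with s hs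
    exact (hFmono hs.1 ht hs.2).le
  · intro y hy
    refine ge_of_tendsto htend ?_
    filter_upwards [eventually_mem_nhdsWithin] with s hs
    exact hy ⟨s, hs, rfl⟩
end

section
/- Let g(b) = min_{t>0} f(t, b) where f(t, b) = exp(t·b − (μ − Nσ²)t/(1+σ²t)) / (1+σ²t)^N, with N ≥ 1, σ² > 0, Nσ² < μ. Then g is strictly increasing on (0, μ), g(b) → 0 as b → 0⁺, and g(b) < 1 for b < μ. Hence for every sufficiently small P_out ∈ (0, 1) there exists a unique b ∈ (0, μ) with g(b) = P_out, and this b is an increasing function of P_out. -/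
open Real Set Filter Topology

set_option linter.unusedVariables false
set_option linter.deprecated false


noncomputable def chF (N : ℕ) (σ2 μ : ℝ) (t b : ℝ) : ℝ :=
  Real.exp (t * b - (μ - (N : ℝ) * σ2) * t / (1 + σ2 * t)) / (1 + σ2 * t) ^ N

noncomputable def chH (N : ℕ) (σ2 μ : ℝ) (t b : ℝ) : ℝ :=
  t * b + (-((μ - (N : ℝ) * σ2) * t / (1 + σ2 * t)) - (N : ℝ) * Real.log (1 + σ2 * t))

noncomputable def chG (N : ℕ) (σ2 μ : ℝ) (b : ℝ) : ℝ :=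
  sInf ((fun t => chF N σ2 μ t b) '' Set.Ioi 0)

lemma den_pos {σ2 : ℝ} (hσ : 0 < σ2) {t : ℝ} (ht : 0 < t) : 0 < 1 + σ2 * t := by nlinarith

lemma chF_pos {N : ℕ} {σ2 μ : ℝ} (hσ : 0 < σ2) {t b : ℝ} (ht : 0 < t) : 0 < chF N σ2 μ t b :=
  div_pos (Real.exp_pos _) (pow_pos (den_pos hσ ht) N)

lemma chF_eq_exp {N : ℕ} {σ2 μ : ℝ} (hσ : 0 < σ2) {t b : ℝ} (ht : 0 < t) :
    chF N σ2 μ t b = Real.exp (chH N σ2 μ t b) := by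
  have h1 : (0:ℝ) < 1 + σ2 * t := den_pos hσ ht
  have h2 : ((1 + σ2 * t):ℝ) ^ N = Real.exp ((N : ℝ) * Real.log (1 + σ2 * t)) := by
    rw [← Real.log_pow, Real.exp_log (pow_pos h1 N)]
  unfold chF chH
  rw [h2, ← Real.exp_sub]
  ring_nf

lemma chF_lt_chF {N : ℕ} {σ2 μ : ℝ} (hσ : 0 < σ2) {t b b' : ℝ} (ht : 0 < t) (hbb : b < b') :
    chF N σ2 μ t b < chF N σ2 μ t b' := by
  apply div_lt_div_of_pos_right ?_ (pow_pos (den_pos hσ ht) N)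
  exact Real.exp_lt_exp.2 (by nlinarith)

lemma chF_image_nonempty {N : ℕ} {σ2 μ : ℝ} (b : ℝ) :
    ((fun t => chF N σ2 μ t b) '' Set.Ioi 0).Nonempty :=
  ⟨chF N σ2 μ 1 b, 1, by norm_num, rfl⟩

lemma chF_image_bddBelow {N : ℕ} {σ2 μ : ℝ} (hσ : 0 < σ2) (b : ℝ) :
    BddBelow ((fun t => chF N σ2 μ t b) '' Set.Ioi 0) := by
  refine ⟨0, ?_⟩
  rintro x ⟨t, ht, rfl⟩
  exact (chF_pos hσ ht).le

lemma chG_le {N : ℕ} {σ2 μ : ℝ} (hσ : 0 < σ2) (b : ℝ) {t : ℝ} (ht : 0 < t) :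
    chG N σ2 μ b ≤ chF N σ2 μ t b :=
  csInf_le (chF_image_bddBelow hσ b) ⟨t, ht, rfl⟩

lemma chG_nonneg {N : ℕ} {σ2 μ : ℝ} (hσ : 0 < σ2) (b : ℝ) : 0 ≤ chG N σ2 μ b :=
  le_csInf (chF_image_nonempty b) (by rintro x ⟨t, ht, rfl⟩; exact (chF_pos hσ ht).le)

lemma exists_chH_neg {N : ℕ} {σ2 μ : ℝ} (hσ : 0 < σ2) (hμ : (N:ℝ)*σ2 < μ) {b : ℝ}
    (hb : b < μ) : ∃ t > (0:ℝ), chH N σ2 μ t b < 0 := by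
  show ∃ t > (0:ℝ), (fun t => t * b + (-((μ - (N : ℝ) * σ2) * t / (1 + σ2 * t)) - (N : ℝ) * Real.log (1 + σ2 * t))) t < 0
  set c : ℝ := μ - (N:ℝ)*σ2 with hc
  set h : ℝ → ℝ := fun t => t * b + (-(c * t / (1 + σ2 * t)) - (N : ℝ) * Real.log (1 + σ2 * t)) with hh
  have hden : HasDerivAt (fun t : ℝ => 1 + σ2 * t) σ2 0 := by
    simpa using ((hasDerivAt_id (0:ℝ)).const_mul σ2).const_add 1
  have hdenne : (1 + σ2 * (0:ℝ)) ≠ 0 := by norm_num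
  have h1 : HasDerivAt (fun t : ℝ => t * b) b 0 := hasDerivAt_mul_const b
  have h2 : HasDerivAt (fun t : ℝ => c * t / (1 + σ2 * t)) c 0 := by
    have hnum : HasDerivAt (fun t : ℝ => c * t) c 0 := by
      simpa using (hasDerivAt_id (0:ℝ)).const_mul c
    have := hnum.fun_div hden hdenne
    simpa using this
  have h3 : HasDerivAt (fun t : ℝ => (N:ℝ) * Real.log (1 + σ2 * t)) ((N:ℝ) * σ2) 0 := by
    have := (hden.log hdenne).const_mul (N:ℝ)
    simpa using this
  have hd : HasDerivAt h (b - μ) 0 := by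
    have := (h1.fun_sub h2).fun_sub h3
    have he : b - c - (N:ℝ)*σ2 = b - μ := by rw [hc]; ring
    rw [he] at this
    convert this using 2 with t
    · rfl
    · rfl
    simp [hh]; ring
  rw [hasDerivAt_iff_tendsto_slope] at hd
  have hd' : Tendsto (slope h 0) (nhdsWithin 0 (Set.Ioi 0)) (nhds (b - μ)) :=
    hd.mono_left (nhdsWithin_mono 0 (fun x hx => ne_of_gt hx))
  have hev : ∀ᶠ t in nhdsWithin 0 (Set.Ioi (0:ℝ)), slope h 0 t < 0 :=
    hd'.eventually_lt_const (by linarith)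
  obtain ⟨t, hts, ht⟩ := (hev.and self_mem_nhdsWithin).exists
  refine ⟨t, ht, ?_⟩
  have h0 : h 0 = 0 := by simp [hh]
  have : slope h 0 t = h t / t := by rw [slope_def_field]; simp [h0]
  rw [this] at hts
  rcases div_neg_iff.mp hts with ⟨_, h2⟩ | ⟨h1, _⟩
  · exact absurd ht (not_lt.2 h2.le)
  · exact h1

lemma chF_ge_one_of_large {N : ℕ} {σ2 μ : ℝ} (hσ : 0 < σ2) (hμ : (N:ℝ)*σ2 < μ) {b : ℝ}
    (hb : 0 < b) : ∃ T > (0:ℝ), ∀ t ≥ T, 1 ≤ chF N σ2 μ t b := by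
  set c : ℝ := μ - (N:ℝ)*σ2 with hc
  have hcpos : 0 < c := by rw [hc]; linarith
  -- main tendsto: exp ((b/σ2) * x) / x ^ N → ∞
  have hmain : Tendsto (fun x : ℝ => Real.exp ((b/σ2) * x) / x ^ N) atTop atTop := by
    refine (tendsto_exp_mul_div_rpow_atTop (N:ℝ) (b/σ2) (div_pos hb hσ)).congr' ?_
    filter_upwards [eventually_gt_atTop (0:ℝ)] with x hx
    rw [Real.rpow_natCast]
  have hu : Tendsto (fun t : ℝ => 1 + σ2 * t) atTop atTop :=
    tendsto_atTop_add_const_left _ 1 (Tendsto.const_mul_atTop hσ tendsto_id)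
  have hcomp : Tendsto (fun t : ℝ => Real.exp ((b/σ2) * (1 + σ2*t)) / (1 + σ2*t) ^ N) atTop atTop :=
    hmain.comp hu
  have hK : (0:ℝ) < Real.exp (-(b/σ2) - c/σ2) := Real.exp_pos _
  have hL : Tendsto (fun t : ℝ =>
      Real.exp (-(b/σ2) - c/σ2) * (Real.exp ((b/σ2) * (1 + σ2*t)) / (1 + σ2*t) ^ N)) atTop atTop :=
    Tendsto.const_mul_atTop hK hcomp
  have hev := (hL.eventually_ge_atTop 1).and (eventually_gt_atTop (0:ℝ))
  rw [eventually_atTop] at hev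
  obtain ⟨T, hT⟩ := hev
  refine ⟨max T 1, lt_max_of_lt_right one_pos, fun t ht => ?_⟩
  obtain ⟨hL1, htpos⟩ := hT t (le_trans (le_max_left _ _) ht)
  -- chF t b ≥ L t
  have hden : (0:ℝ) < 1 + σ2 * t := den_pos hσ htpos
  have harg : Real.exp (-(b/σ2) - c/σ2) * (Real.exp ((b/σ2) * (1 + σ2*t)) / (1 + σ2*t) ^ N)
      = Real.exp (t * b - c/σ2) / (1 + σ2*t) ^ N := by
    rw [mul_div_assoc', ← Real.exp_add]
    congr 2
    field_simp
    ring
  rw [harg] at hL1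
  refine le_trans hL1 ?_
  unfold chF
  rw [← hc]
  have hfrac : c * t / (1 + σ2 * t) ≤ c / σ2 := by
    rw [div_le_div_iff₀ hden hσ]
    nlinarith
  exact (div_le_div_iff_of_pos_right (pow_pos hden N)).2 (Real.exp_le_exp.2 (by linarith))

lemma chF_continuousOn {N : ℕ} {σ2 μ b : ℝ} (hσ : 0 < σ2) :
    ContinuousOn (fun t => chF N σ2 μ t b) (Set.Ici 0) := by
  have hne : ∀ t ∈ Set.Ici (0:ℝ), 1 + σ2 * t ≠ 0 := by
    intro t ht
    have : (0:ℝ) ≤ t := ht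
    positivity
  apply ContinuousOn.div
  · exact Real.continuous_exp.comp_continuousOn
      (((continuous_id.mul continuous_const).continuousOn).sub
        (ContinuousOn.div (by fun_prop) (by fun_prop) hne))
  · fun_prop
  · intro t ht
    exact pow_ne_zero _ (hne t ht)

lemma chF_tendsto_one {N : ℕ} {σ2 μ b : ℝ} (hσ : 0 < σ2) :
    Tendsto (fun t => chF N σ2 μ t b) (nhdsWithin 0 (Set.Ioi 0)) (nhds 1) := by
  have hc : ContinuousAt (fun t => chF N σ2 μ t b) 0 := by
    have hne : (1 + σ2 * (0:ℝ)) ≠ 0 := by norm_num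
    apply ContinuousAt.div
    · exact (Real.continuous_exp.continuousAt).comp
        (((continuous_id.mul continuous_const).continuousAt).sub
          (ContinuousAt.div (by fun_prop) (by fun_prop) hne))
    · fun_prop
    · exact pow_ne_zero _ hne
  have h0 : chF N σ2 μ 0 b = 1 := by simp [chF]
  have := hc.tendsto
  rw [h0] at this
  exact this.mono_left nhdsWithin_le_nhds
lemma chF_exists_min {N : ℕ} {σ2 μ : ℝ} (hσ : 0 < σ2) (hμ : (N:ℝ)*σ2 < μ) {b : ℝ}
    (hb : b ∈ Set.Ioo 0 μ) :
    ∃ t > (0:ℝ), chF N σ2 μ t b < 1 ∧ ∀ s > (0:ℝ), chF N σ2 μ t b ≤ chF N σ2 μ s b := by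
  obtain ⟨t₀, ht₀, hlt⟩ := exists_chH_neg hσ hμ hb.2
  have hf₀ : chF N σ2 μ t₀ b < 1 := by
    rw [chF_eq_exp hσ ht₀]
    exact Real.exp_lt_one_iff.2 hlt
  obtain ⟨T, hT0, hT⟩ := chF_ge_one_of_large hσ hμ (b := b) hb.1
  have ht₀T : t₀ < T := by
    by_contra hcon
    exact absurd (hT t₀ (not_lt.1 hcon)) (not_le.2 hf₀)
  -- small-t region
  have hev : ∀ᶠ t in nhdsWithin 0 (Set.Ioi (0:ℝ)), chF N σ2 μ t₀ b < chF N σ2 μ t b :=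
    (chF_tendsto_one (b := b) (μ := μ) (N := N) hσ).eventually_const_lt hf₀
  obtain ⟨u, hu, hsub0⟩ := mem_nhdsGT_iff_exists_Ioo_subset.mp hev
  set δ : ℝ := min u t₀ with hδ
  have hδ0 : 0 < δ := lt_min hu ht₀
  have hδt₀ : δ ≤ t₀ := min_le_right _ _
  have hsmall : ∀ s : ℝ, 0 < s → s < δ → chF N σ2 μ t₀ b < chF N σ2 μ s b := by
    intro s hs hsδ
    exact hsub0 ⟨hs, lt_of_lt_of_le hsδ (min_le_left _ _)⟩
  -- compact minimum on [δ, T]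
  have hsub : Set.Icc δ T ⊆ Set.Ici (0:ℝ) := fun x hx => le_trans hδ0.le hx.1
  obtain ⟨t, htmem, htmin⟩ := (isCompact_Icc (a := δ) (b := T)).exists_isMinOn
    ⟨t₀, hδt₀, ht₀T.le⟩ ((chF_continuousOn (b := b) (μ := μ) (N := N) hσ).mono hsub)
  have htpos : 0 < t := lt_of_lt_of_le hδ0 htmem.1
  have htle : chF N σ2 μ t b ≤ chF N σ2 μ t₀ b := htmin ⟨hδt₀, ht₀T.le⟩
  refine ⟨t, htpos, lt_of_le_of_lt htle hf₀, fun s hs => ?_⟩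
  rcases lt_or_ge s δ with h1 | h1
  · exact le_trans htle (hsmall s hs h1).le
  rcases le_or_gt s T with h2 | h2
  · exact htmin ⟨h1, h2⟩
  · exact le_trans (le_of_lt (lt_of_le_of_lt htle hf₀)) (hT s h2.le)

lemma chG_attained {N : ℕ} {σ2 μ : ℝ} (hσ : 0 < σ2) (hμ : (N:ℝ)*σ2 < μ) {b : ℝ}
    (hb : b ∈ Set.Ioo 0 μ) :
    ∃ t > (0:ℝ), chG N σ2 μ b = chF N σ2 μ t b ∧ chF N σ2 μ t b < 1 := by
  obtain ⟨t, htpos, hlt, hmin⟩ := chF_exists_min hσ hμ hb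
  refine ⟨t, htpos, ?_, hlt⟩
  apply IsLeast.csInf_eq
  constructor
  · exact ⟨t, htpos, rfl⟩
  · rintro x ⟨s, hs, rfl⟩
    exact hmin s hs

noncomputable def chL (N : ℕ) (σ2 μ : ℝ) (b : ℝ) : ℝ :=
  sInf ((fun t => chH N σ2 μ t b) '' Set.Ioi 0)

lemma chH_image_nonempty {N : ℕ} {σ2 μ : ℝ} (b : ℝ) :
    ((fun t => chH N σ2 μ t b) '' Set.Ioi 0).Nonempty :=
  ⟨chH N σ2 μ 1 b, 1, by norm_num, rfl⟩

lemma chH_image_bddBelow {N : ℕ} {σ2 μ : ℝ} (hσ : 0 < σ2) (hμ : (N:ℝ)*σ2 < μ) {b : ℝ}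
    (hb : b ∈ Set.Ioo 0 μ) :
    BddBelow ((fun t => chH N σ2 μ t b) '' Set.Ioi 0) := by
  obtain ⟨t₀, ht₀, hG, _⟩ := chG_attained hσ hμ hb
  refine ⟨chH N σ2 μ t₀ b, ?_⟩
  rintro x ⟨s, hs, rfl⟩
  have h1 : chF N σ2 μ t₀ b ≤ chF N σ2 μ s b := hG ▸ chG_le hσ b hs
  rw [chF_eq_exp hσ ht₀, chF_eq_exp hσ hs, Real.exp_le_exp] at h1
  exact h1

lemma chG_eq_exp_chL {N : ℕ} {σ2 μ : ℝ} (hσ : 0 < σ2) (hμ : (N:ℝ)*σ2 < μ) {b : ℝ}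
    (hb : b ∈ Set.Ioo 0 μ) :
    chG N σ2 μ b = Real.exp (chL N σ2 μ b) := by
  have himg : (fun t => chF N σ2 μ t b) '' Set.Ioi 0
      = Real.exp '' ((fun t => chH N σ2 μ t b) '' Set.Ioi 0) := by
    rw [Set.image_image]
    exact Set.image_congr (fun t ht => chF_eq_exp hσ ht)
  rw [chG, himg, chL]
  exact (Monotone.map_csInf_of_continuousAt (Real.continuous_exp.continuousAt)
    Real.exp_monotone (chH_image_nonempty b) (chH_image_bddBelow hσ hμ hb)).symm

lemma chL_le {N : ℕ} {σ2 μ : ℝ} (hσ : 0 < σ2) (hμ : (N:ℝ)*σ2 < μ) {b : ℝ}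
    (hb : b ∈ Set.Ioo 0 μ) {t : ℝ} (ht : 0 < t) : chL N σ2 μ b ≤ chH N σ2 μ t b :=
  csInf_le (chH_image_bddBelow hσ hμ hb) ⟨t, ht, rfl⟩

lemma chL_concave {N : ℕ} {σ2 μ : ℝ} (hσ : 0 < σ2) (hμ : (N:ℝ)*σ2 < μ) :
    ConcaveOn ℝ (Set.Ioo 0 μ) (chL N σ2 μ) := by
  refine ⟨convex_Ioo 0 μ, ?_⟩
  intro x hx y hy p q hp hq hpq
  apply le_csInf (chH_image_nonempty _)
  rintro z ⟨t, ht, rfl⟩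
  have hsplit : chH N σ2 μ t (p • x + q • y) = p * chH N σ2 μ t x + q * chH N σ2 μ t y := by
    simp only [chH, smul_eq_mul]
    linear_combination (-(-((μ - (N:ℝ) * σ2) * t / (1 + σ2 * t)) - (N:ℝ) * Real.log (1 + σ2 * t))) * hpq
  show p • chL N σ2 μ x + q • chL N σ2 μ y ≤ chH N σ2 μ t (p • x + q • y)
  rw [hsplit]
  have h1 : p * chL N σ2 μ x ≤ p * chH N σ2 μ t x :=
    mul_le_mul_of_nonneg_left (chL_le hσ hμ hx ht) hp
  have h2 : q * chL N σ2 μ y ≤ q * chH N σ2 μ t y :=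
    mul_le_mul_of_nonneg_left (chL_le hσ hμ hy ht) hq
  simpa [smul_eq_mul] using add_le_add h1 h2

lemma chG_continuousOn {N : ℕ} {σ2 μ : ℝ} (hσ : 0 < σ2) (hμ : (N:ℝ)*σ2 < μ) :
    ContinuousOn (chG N σ2 μ) (Set.Ioo 0 μ) := by
  have hL : ContinuousOn (chL N σ2 μ) (Set.Ioo 0 μ) :=
    (chL_concave hσ hμ).continuousOn isOpen_Ioo
  have : ContinuousOn (fun b => Real.exp (chL N σ2 μ b)) (Set.Ioo 0 μ) :=
    Real.continuous_exp.comp_continuousOn hL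
  exact this.congr (fun b hb => chG_eq_exp_chL hσ hμ hb)

lemma chG_strictMonoOn {N : ℕ} {σ2 μ : ℝ} (hσ : 0 < σ2) (hμ : (N:ℝ)*σ2 < μ) :
    StrictMonoOn (chG N σ2 μ) (Set.Ioo 0 μ) := by
  intro b hb b' hb' hlt
  obtain ⟨t, ht, hGt, _⟩ := chG_attained hσ hμ hb'
  calc chG N σ2 μ b ≤ chF N σ2 μ t b := chG_le hσ b ht
    _ < chF N σ2 μ t b' := chF_lt_chF hσ ht hlt
    _ = chG N σ2 μ b' := hGt.symm

lemma chG_lt_one {N : ℕ} {σ2 μ : ℝ} (hσ : 0 < σ2) (hμ : (N:ℝ)*σ2 < μ) {b : ℝ}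
    (hb : b ∈ Set.Ioo 0 μ) : chG N σ2 μ b < 1 := by
  obtain ⟨t, ht, hGt, hlt⟩ := chG_attained hσ hμ hb
  rw [hGt]; exact hlt

lemma chG_pos {N : ℕ} {σ2 μ : ℝ} (hσ : 0 < σ2) (hμ : (N:ℝ)*σ2 < μ) {b : ℝ}
    (hb : b ∈ Set.Ioo 0 μ) : 0 < chG N σ2 μ b := by
  obtain ⟨t, ht, hGt, _⟩ := chG_attained hσ hμ hb
  rw [hGt]; exact chF_pos hσ ht

lemma chG_bound_small {N : ℕ} (hN : 1 ≤ N) {σ2 μ : ℝ} (hσ : 0 < σ2) (hμ : (N:ℝ)*σ2 < μ)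
    {b : ℝ} (hb1 : 0 < b) (hb2 : b ≤ 1) (hb3 : b ≤ σ2^2) :
    chG N σ2 μ b ≤ Real.exp 1 * Real.sqrt b / σ2 := by
  have hsq : 0 < Real.sqrt b := Real.sqrt_pos.2 hb1
  set t : ℝ := (Real.sqrt b)⁻¹ with htdef
  have htpos : 0 < t := inv_pos.2 hsq
  have hden : 0 < 1 + σ2 * t := den_pos hσ htpos
  have htb : t * b = Real.sqrt b := by
    rw [htdef, inv_mul_eq_div, Real.div_sqrt]
  have hsb1 : Real.sqrt b ≤ 1 := by
    calc Real.sqrt b ≤ Real.sqrt 1 := Real.sqrt_le_sqrt hb2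
      _ = 1 := Real.sqrt_one
  have hsb : Real.sqrt b ≤ σ2 := by
    calc Real.sqrt b ≤ Real.sqrt (σ2^2) := Real.sqrt_le_sqrt hb3
      _ = σ2 := Real.sqrt_sq hσ.le
  have hσt : 1 ≤ σ2 * t := by
    rw [htdef, ← div_eq_mul_inv, le_div_iff₀ hsq, one_mul]
    exact hsb
  have hσtpos : 0 < σ2 * t := by linarith
  have hcpos : (0:ℝ) < μ - (N:ℝ)*σ2 := by linarith
  have h1 : chF N σ2 μ t b ≤ Real.exp 1 / (1 + σ2*t)^N := by
    unfold chF
    refine (div_le_div_iff_of_pos_right (pow_pos hden N)).2 (Real.exp_le_exp.2 ?_)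
    have hnn : 0 ≤ (μ - (N:ℝ)*σ2) * t / (1 + σ2 * t) := by positivity
    rw [htb] at *
    nlinarith
  have h2 : Real.exp 1 / (1 + σ2*t)^N ≤ Real.exp 1 / (σ2*t) := by
    apply div_le_div_of_nonneg_left (Real.exp_pos 1).le hσtpos
    calc σ2 * t ≤ (σ2*t)^N := le_self_pow₀ hσt (Nat.one_le_iff_ne_zero.mp hN)
      _ ≤ (1 + σ2*t)^N := pow_le_pow_left₀ (by positivity) (by linarith) N
  have h3 : Real.exp 1 / (σ2*t) = Real.exp 1 * Real.sqrt b / σ2 := by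
    rw [htdef]
    field_simp
  calc chG N σ2 μ b ≤ chF N σ2 μ t b := chG_le hσ b htpos
    _ ≤ Real.exp 1 / (1 + σ2*t)^N := h1
    _ ≤ Real.exp 1 / (σ2*t) := h2
    _ = Real.exp 1 * Real.sqrt b / σ2 := h3

lemma chG_tendsto_zero {N : ℕ} (hN : 1 ≤ N) {σ2 μ : ℝ} (hσ : 0 < σ2) (hμ : (N:ℝ)*σ2 < μ) :
    Tendsto (chG N σ2 μ) (nhdsWithin 0 (Set.Ioi 0)) (nhds 0) := by
  have hbound : Tendsto (fun b => Real.exp 1 * Real.sqrt b / σ2)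
      (nhdsWithin 0 (Set.Ioi 0)) (nhds 0) := by
    have h1 : Tendsto Real.sqrt (nhds 0) (nhds 0) := by
      simpa using (Real.continuous_sqrt.tendsto 0)
    have h2 : Tendsto (fun b => Real.exp 1 * Real.sqrt b / σ2) (nhds 0) (nhds 0) := by
      have := (h1.const_mul (Real.exp 1)).div_const σ2
      simpa using this
    exact h2.mono_left nhdsWithin_le_nhds
  have hδ : (0:ℝ) < min 1 (σ2^2) := lt_min one_pos (by positivity)
  apply tendsto_of_tendsto_of_tendsto_of_le_of_le' tendsto_const_nhds hbound
  · exact eventually_of_mem self_mem_nhdsWithin (fun b hb => chG_nonneg hσ b)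
  · filter_upwards [Ioo_mem_nhdsGT_of_mem (Set.left_mem_Ico.2 hδ)] with b hb
    exact chG_bound_small hN hσ hμ hb.1 (le_trans hb.2.le (min_le_left _ _))
      (le_trans hb.2.le (min_le_right _ _))


/-- Theorem 1 of the paper: g(b) = min_{t>0} f(t,b) is strictly increasing on (0,μ),
tends to 0 as b → 0⁺, is < 1 on (0,μ); hence for every sufficiently small
P_out ∈ (0,1) there is a unique b ∈ (0,μ) with g(b) = P_out, and this b increases
with P_out. -/
theorem stmt_7 (N : ℕ) (hN : 1 ≤ N) (σ2 μ : ℝ) (hσ : 0 < σ2) (hμ : (N : ℝ) * σ2 < μ) :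
    StrictMonoOn
        (fun b : ℝ =>
          sInf ((fun t : ℝ =>
              Real.exp (t * b - (μ - (N : ℝ) * σ2) * t / (1 + σ2 * t)) / (1 + σ2 * t) ^ N) ''
            Set.Ioi 0))
        (Set.Ioo 0 μ) ∧
      Tendsto
        (fun b : ℝ =>
          sInf ((fun t : ℝ =>
              Real.exp (t * b - (μ - (N : ℝ) * σ2) * t / (1 + σ2 * t)) / (1 + σ2 * t) ^ N) ''
            Set.Ioi 0))
        (nhdsWithin 0 (Set.Ioi 0)) (nhds 0) ∧
      (∀ b ∈ Set.Ioo 0 μ,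
        sInf ((fun t : ℝ =>
            Real.exp (t * b - (μ - (N : ℝ) * σ2) * t / (1 + σ2 * t)) / (1 + σ2 * t) ^ N) ''
          Set.Ioi 0) < 1) ∧
      ∃ ε > 0, ∀ P : ℝ, P ∈ Set.Ioo (0 : ℝ) ε →
        (∃! b : ℝ, b ∈ Set.Ioo 0 μ ∧
          sInf ((fun t : ℝ =>
              Real.exp (t * b - (μ - (N : ℝ) * σ2) * t / (1 + σ2 * t)) / (1 + σ2 * t) ^ N) ''
            Set.Ioi 0) = P) ∧
        ∀ P' : ℝ, P' ∈ Set.Ioo (0 : ℝ) ε → P < P' →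
          ∀ b b' : ℝ, b ∈ Set.Ioo 0 μ → b' ∈ Set.Ioo 0 μ →
            sInf ((fun t : ℝ =>
                Real.exp (t * b - (μ - (N : ℝ) * σ2) * t / (1 + σ2 * t)) / (1 + σ2 * t) ^ N) ''
              Set.Ioi 0) = P →
            sInf ((fun t : ℝ =>
                Real.exp (t * b' - (μ - (N : ℝ) * σ2) * t / (1 + σ2 * t)) / (1 + σ2 * t) ^ N) ''
              Set.Ioi 0) = P' →
            b < b' := by
  have key : ∀ b : ℝ, sInf ((fun t : ℝ =>
      Real.exp (t * b - (μ - (N : ℝ) * σ2) * t / (1 + σ2 * t)) / (1 + σ2 * t) ^ N) ''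
        Set.Ioi 0) = chG N σ2 μ b := fun _ => rfl
  have hμ0 : 0 < μ := lt_trans (by positivity : (0:ℝ) < (N:ℝ)*σ2) hμ
  have hNpos : (0:ℝ) < (N:ℝ)*σ2 := by
    have : (1:ℝ) ≤ (N:ℝ) := by exact_mod_cast hN
    nlinarith
  have hhalf : μ/2 ∈ Set.Ioo 0 μ := ⟨by linarith, by linarith⟩
  simp only [key]
  refine ⟨chG_strictMonoOn hσ hμ, chG_tendsto_zero hN hσ hμ, fun b hb => chG_lt_one hσ hμ hb, ?_⟩
  refine ⟨chG N σ2 μ (μ/2), chG_pos hσ hμ hhalf, fun P hP => ?_⟩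
  constructor
  · -- existence and uniqueness
    have hev1 : ∀ᶠ b in nhdsWithin 0 (Set.Ioi (0:ℝ)), chG N σ2 μ b < P :=
      (chG_tendsto_zero hN hσ hμ).eventually_lt_const hP.1
    have hev2 : Set.Ioo (0:ℝ) (μ/2) ∈ nhdsWithin 0 (Set.Ioi (0:ℝ)) :=
      Ioo_mem_nhdsGT_of_mem (Set.left_mem_Ico.2 (by linarith))
    obtain ⟨b₁, hb₁P, hb₁mem⟩ := (hev1.and (eventually_of_mem hev2 (fun x hx => hx))).exists
    have hb₁μ : b₁ ∈ Set.Ioo 0 μ := ⟨hb₁mem.1, by linarith [hb₁mem.2]⟩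
    have hsub : Set.Icc b₁ (μ/2) ⊆ Set.Ioo 0 μ := fun x hx =>
      ⟨lt_of_lt_of_le hb₁mem.1 hx.1, lt_of_le_of_lt hx.2 hhalf.2⟩
    have hcont : ContinuousOn (chG N σ2 μ) (Set.Icc b₁ (μ/2)) :=
      (chG_continuousOn hσ hμ).mono hsub
    have hIVT := intermediate_value_Icc (le_of_lt hb₁mem.2) hcont
    obtain ⟨b, hbmem, hbP⟩ := hIVT ⟨hb₁P.le, hP.2.le⟩
    have hbμ : b ∈ Set.Ioo 0 μ := hsub hbmem
    refine ⟨b, ⟨hbμ, hbP⟩, ?_⟩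
    rintro y ⟨hyμ, hyP⟩
    exact (chG_strictMonoOn hσ hμ).injOn hyμ hbμ (by rw [hyP, hbP])
  · -- monotonicity of the solution in P
    intro P' hP' hPP' b b' hbμ hb'μ hbP hb'P
    rcases lt_trichotomy b b' with h | h | h
    · exact h
    · exfalso; rw [h, hb'P] at hbP; linarith
    · exfalso
      have := chG_strictMonoOn hσ hμ hb'μ hbμ h
      rw [hbP, hb'P] at this
      linarith
end

section
/- Fix an outage level P ∈ (0,1) and let b(μ) ∈ (0, μ) denote the unique solution of min_{t>0} f(t, b; μ) = P where f(t, b; μ) = exp(t b − (μ − Nσ²)t/(1+σ²t))/(1+σ²t)^N (N ≥ 1, σ² > 0, Nσ² < μ). Then b is monotonically nondecreasing in μ: if μ₁ ≤ μ₂ then b(μ₁) ≤ b(μ₂). -/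
open Real Set

/-- Corollary 3 key step: the Chernoff threshold b(μ), defined by
min_{t>0} f(t, b; μ) = P with b ∈ (0, μ), is nondecreasing in the mean μ. -/
theorem stmt_8 (N : ℕ) (hN : 1 ≤ N) (σ2 : ℝ) (hσ : 0 < σ2) (P : ℝ) (hP : P ∈ Set.Ioo (0 : ℝ) 1)
    (μ1 μ2 b1 b2 : ℝ) (hμ1 : (N : ℝ) * σ2 < μ1) (hμ2 : (N : ℝ) * σ2 < μ2) (hμ : μ1 ≤ μ2)
    (hb1 : b1 ∈ Set.Ioo 0 μ1) (hb2 : b2 ∈ Set.Ioo 0 μ2)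
    (h1 : sInf ((fun t : ℝ =>
        Real.exp (t * b1 - (μ1 - (N : ℝ) * σ2) * t / (1 + σ2 * t)) / (1 + σ2 * t) ^ N) ''
      Set.Ioi 0) = P)
    (h2 : sInf ((fun t : ℝ =>
        Real.exp (t * b2 - (μ2 - (N : ℝ) * σ2) * t / (1 + σ2 * t)) / (1 + σ2 * t) ^ N) ''
      Set.Ioi 0) = P) :
    b1 ≤ b2 := by
  by_contra hcon
  push_neg at hcon
  obtain ⟨hP0, hP1⟩ := hP
  obtain ⟨hb10, hb1μ⟩ := hb1
  obtain ⟨hb20, hb2μ⟩ := hb2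
  set f1 : ℝ → ℝ := fun t : ℝ =>
    Real.exp (t * b1 - (μ1 - (N : ℝ) * σ2) * t / (1 + σ2 * t)) / (1 + σ2 * t) ^ N with hf1
  set f2 : ℝ → ℝ := fun t : ℝ =>
    Real.exp (t * b2 - (μ2 - (N : ℝ) * σ2) * t / (1 + σ2 * t)) / (1 + σ2 * t) ^ N with hf2
  have hNσ : 0 < (N : ℝ) * σ2 := by positivity
  have hμ2pos : 0 < μ2 := hNσ.trans hμ2
  set δ : ℝ := b1 - b2 with hδ
  have hδpos : 0 < δ := sub_pos.mpr hcon
  set t0 : ℝ := (1 - P) / (2 * μ2) with ht0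
  have ht0pos : 0 < t0 := by
    apply div_pos <;> [linarith; positivity]
  -- each f2 t ≥ P
  have hbdd : BddBelow (f2 '' Set.Ioi 0) := by
    refine ⟨0, ?_⟩
    rintro x ⟨t, ht, rfl⟩
    have hD : (0:ℝ) < (1 + σ2 * t) ^ N := by
      have : 0 < t := ht
      positivity
    positivity
  have hPle : ∀ t : ℝ, 0 < t → P ≤ f2 t := by
    intro t ht
    rw [← h2]
    exact csInf_le hbdd ⟨t, ht, rfl⟩
  -- lower bound f2 t ≥ exp (t*(b2 - μ2))
  have hlow : ∀ t : ℝ, 0 < t → Real.exp (t * (b2 - μ2)) ≤ f2 t := by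
    intro t ht
    have hd1 : (1:ℝ) ≤ 1 + σ2 * t := by nlinarith
    have hDle : (1 + σ2 * t) ^ N ≤ Real.exp ((N : ℝ) * σ2 * t) := by
      calc (1 + σ2 * t) ^ N ≤ (Real.exp (σ2 * t)) ^ N := by
            apply pow_le_pow_left₀ (by linarith)
            linarith [Real.add_one_le_exp (σ2 * t)]
        _ = Real.exp ((N : ℝ) * σ2 * t) := by
            rw [← Real.exp_nat_mul]; ring_nf
    have hA : t * b2 - (μ2 - (N : ℝ) * σ2) * t ≤
        t * b2 - (μ2 - (N : ℝ) * σ2) * t / (1 + σ2 * t) := by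
      have : (μ2 - (N : ℝ) * σ2) * t / (1 + σ2 * t) ≤ (μ2 - (N : ℝ) * σ2) * t := by
        apply div_le_self (by nlinarith) hd1
      linarith
    have : Real.exp (t * (b2 - μ2)) =
        Real.exp (t * b2 - (μ2 - (N : ℝ) * σ2) * t) / Real.exp ((N : ℝ) * σ2 * t) := by
      rw [← Real.exp_sub]; ring_nf
    rw [this]
    exact div_le_div₀ (Real.exp_pos _).le (Real.exp_le_exp.2 hA)
      (by positivity) hDle
  -- f1 t ≥ f2 t * exp (t * δ)
  have hcomp : ∀ t : ℝ, 0 < t → f2 t * Real.exp (t * δ) ≤ f1 t := by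
    intro t ht
    have hd0 : (0:ℝ) < 1 + σ2 * t := by nlinarith
    have hexp : t * b2 - (μ2 - (N : ℝ) * σ2) * t / (1 + σ2 * t) + t * δ ≤
        t * b1 - (μ1 - (N : ℝ) * σ2) * t / (1 + σ2 * t) := by
      have : (μ1 - (N : ℝ) * σ2) * t / (1 + σ2 * t) ≤
          (μ2 - (N : ℝ) * σ2) * t / (1 + σ2 * t) := by
        rw [div_le_div_iff_of_pos_right hd0]
        nlinarith
      simp only [hδ]; linarith
    have heq : f2 t * Real.exp (t * δ) =
        Real.exp (t * b2 - (μ2 - (N : ℝ) * σ2) * t / (1 + σ2 * t) + t * δ) /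
          (1 + σ2 * t) ^ N := by
      simp only [hf2, Real.exp_add]; ring
    rw [heq]
    show _ ≤ Real.exp (t * b1 - (μ1 - (N : ℝ) * σ2) * t / (1 + σ2 * t)) / (1 + σ2 * t) ^ N
    rw [div_le_div_iff_of_pos_right (by positivity)]
    exact Real.exp_le_exp.2 hexp
  -- the contradiction bound
  set L : ℝ := min ((1 + P) / 2) (P * Real.exp (t0 * δ)) with hL
  have hLleP : L ≤ P := by
    rw [← h1]
    apply le_csInf ⟨f1 1, Set.mem_image_of_mem _ (by norm_num : (1:ℝ) ∈ Set.Ioi 0)⟩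
    rintro x ⟨t, ht, rfl⟩
    have ht' : (0:ℝ) < t := ht
    rcases le_or_gt t t0 with htt | htt
    · -- small t : f1 t ≥ f2 t ≥ exp(t(b2-μ2)) ≥ 1 - μ2 t ≥ (1+P)/2
      have h1' : 1 - μ2 * t ≤ Real.exp (t * (b2 - μ2)) := by
        have := Real.add_one_le_exp (t * (b2 - μ2))
        nlinarith
      have h2' : (1 + P) / 2 ≤ 1 - μ2 * t := by
        have hmt0 : μ2 * t0 = (1 - P) / 2 := by
          rw [ht0]; field_simp [hμ2pos.ne']
        nlinarith [mul_le_mul_of_nonneg_left htt hμ2pos.le]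
      have h3' : f2 t ≤ f2 t * Real.exp (t * δ) :=
        le_mul_of_one_le_right ((hP0.trans_le (hPle t ht')).le)
          (Real.one_le_exp (by positivity))
      calc L ≤ (1 + P) / 2 := min_le_left _ _
        _ ≤ 1 - μ2 * t := h2'
        _ ≤ Real.exp (t * (b2 - μ2)) := h1'
        _ ≤ f2 t := hlow t ht'
        _ ≤ f2 t * Real.exp (t * δ) := h3'
        _ ≤ f1 t := hcomp t ht'
    · -- large t : f1 t ≥ P * exp(t0 δ)
      calc L ≤ P * Real.exp (t0 * δ) := min_le_right _ _
        _ ≤ f2 t * Real.exp (t * δ) := by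
            exact mul_le_mul (hPle t ht') (Real.exp_le_exp.2 (by nlinarith))
              (Real.exp_pos _).le ((hP0.trans_le (hPle t ht')).le)
        _ ≤ f1 t := hcomp t ht'
  have hPltL : P < L := by
    apply lt_min (by linarith)
    nth_rewrite 1 [← mul_one P]
    exact mul_lt_mul_of_pos_left (Real.one_lt_exp_iff.2 (mul_pos ht0pos hδpos)) hP0
  linarith
end

section
/- Let H₀ ∈ ℂ^{N×M} have rows h₀ᵀ,...,h_{N−1}ᵀ that are i.i.d. with i.i.d. standard complex Gaussian entries, and let w = (∑ₙ hₙ*) / ‖∑ₙ hₙ‖. Then ‖H₀ w‖² = (∑_{n₁} |∑_{n₂} h_{n₁}ᵀ h_{n₂}*|²) / (∑_{n₁}∑_{n₂} h_{n₁}ᵀ h_{n₂}*), and almost surely lim_{M→∞} ‖H₀ w‖²/M = 1. -/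
open MeasureTheory ProbabilityTheory Filter Topology

open Real

/-- The standard circularly-symmetric complex Gaussian measure on ℂ. -/
noncomputable def stdComplexGaussian : Measure ℂ :=
  ((ProbabilityTheory.gaussianReal 0 (1 / 2)).prod
      (ProbabilityTheory.gaussianReal 0 (1 / 2))).map fun p : ℝ × ℝ =>
    Complex.equivRealProd.symm p


lemma aux_integral_sq_exp : ∫ x : ℝ, x ^ 2 * Real.exp (-x ^ 2) = Real.sqrt π / 2 := by
  have hv : ∀ x : ℝ, HasDerivAt (fun y : ℝ => -(1/2) * Real.exp (-y^2)) (x * Real.exp (-x^2)) x := by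
    intro x
    have h1 : HasDerivAt (fun y : ℝ => -y^2) (-(2*x)) x := by
      simpa using ((hasDerivAt_pow 2 x).fun_neg)
    have := (h1.exp).const_mul (-(1/2) : ℝ)
    exact this.congr_deriv (by ring)
  have hu : ∀ x : ℝ, HasDerivAt (fun y : ℝ => y) 1 x := fun x => hasDerivAt_id x
  have hint1 : Integrable (fun x : ℝ => x * (x * Real.exp (-x^2))) := by
    have h2 := integrable_rpow_mul_exp_neg_mul_sq (b := 1) one_pos (s := 2) (by norm_num)
    refine h2.congr (Filter.Eventually.of_forall fun x => ?_)
    show x ^ (2:ℝ) * Real.exp (-1 * x ^ 2) = x * (x * Real.exp (-x^2))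
    rw [show ((2:ℝ)) = ((2:ℕ):ℝ) by norm_num, Real.rpow_natCast]
    ring_nf
  have hint2 : Integrable (fun x : ℝ => 1 * (-(1/2) * Real.exp (-x^2))) := by
    have := (integrable_exp_neg_mul_sq (b := 1) one_pos).const_mul (-(1/2) : ℝ)
    refine this.congr (Filter.Eventually.of_forall fun x => ?_)
    show -(1/2) * Real.exp (-1 * x ^ 2) = 1 * (-(1/2) * Real.exp (-x^2))
    ring_nf
  have hint3 : Integrable (fun x : ℝ => x * (-(1/2) * Real.exp (-x^2))) := by
    have := (integrable_mul_exp_neg_mul_sq (b := 1) one_pos).const_mul (-(1/2) : ℝ)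
    refine this.congr (Filter.Eventually.of_forall fun x => ?_)
    show -(1/2) * (x * Real.exp (-1 * x ^ 2)) = x * (-(1/2) * Real.exp (-x^2))
    ring_nf
  have hibp := MeasureTheory.integral_mul_deriv_eq_deriv_mul_of_integrable (fun x _ => hu x) (fun x _ => hv x) hint1 hint2 hint3
  have hg : ∫ x : ℝ, Real.exp (-x^2) = Real.sqrt π := by
    have := integral_gaussian 1
    simpa using this
  calc ∫ x : ℝ, x ^ 2 * Real.exp (-x ^ 2) = ∫ x : ℝ, x * (x * Real.exp (-x^2)) := by
        congr 1; ext x; ring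
    _ = - ∫ x : ℝ, 1 * (-(1/2) * Real.exp (-x^2)) := hibp
    _ = ∫ x : ℝ, (1/2) * Real.exp (-x^2) := by
        rw [← integral_neg]; congr 1; ext x; ring
    _ = (1/2) * ∫ x : ℝ, Real.exp (-x^2) := by rw [integral_const_mul]
    _ = Real.sqrt π / 2 := by rw [hg]; ring

lemma aux_integral_id_exp : ∫ x : ℝ, x * Real.exp (-x ^ 2) = 0 := by
  have h := MeasureTheory.integral_neg_eq_self (fun x : ℝ => x * Real.exp (-x ^ 2)) volume
  simp only [neg_sq, neg_mul] at h
  rw [integral_neg] at h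
  linarith


lemma aux_pdf_eq (x : ℝ) : gaussianPDFReal 0 (1/2) x = (Real.sqrt π)⁻¹ * Real.exp (-x^2) := by
  rw [gaussianPDFReal]
  have h2 : Real.sqrt 2 ≠ 0 := by positivity
  norm_num
  field_simp

lemma aux_gauss_eq : gaussianReal 0 (1/2) =
    volume.withDensity (fun x => ((gaussianPDFReal 0 (1/2) x).toNNReal : ENNReal)) := by
  rw [gaussianReal_of_var_ne_zero _ (by norm_num)]
  rfl

lemma aux_gauss_integral (f : ℝ → ℝ) :
    ∫ x, f x ∂(gaussianReal 0 (1/2)) = ∫ x, (Real.sqrt π)⁻¹ * Real.exp (-x^2) * f x := by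
  rw [aux_gauss_eq, integral_withDensity_eq_integral_smul
    (measurable_gaussianPDFReal 0 (1/2)).real_toNNReal]
  congr 1; ext x
  rw [NNReal.smul_def, Real.coe_toNNReal _ (gaussianPDFReal_nonneg _ _ _), aux_pdf_eq, smul_eq_mul]

lemma aux_gauss_integrable (f : ℝ → ℝ)
    (hf : Integrable (fun x => (Real.sqrt π)⁻¹ * Real.exp (-x^2) * f x)) :
    Integrable f (gaussianReal 0 (1/2)) := by
  rw [aux_gauss_eq, integrable_withDensity_iff_integrable_smul
    (measurable_gaussianPDFReal 0 (1/2)).real_toNNReal]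
  refine hf.congr (Filter.Eventually.of_forall fun x => ?_)
  simp only [NNReal.smul_def, Real.coe_toNNReal _ (gaussianPDFReal_nonneg _ _ _), aux_pdf_eq,
    smul_eq_mul]
  rw [Real.coe_toNNReal _ (by positivity)]

lemma aux_sqrt_pi_ne : Real.sqrt π ≠ 0 := by
  positivity

lemma aux_gauss_i1 : Integrable (fun x : ℝ => x) (gaussianReal 0 (1/2)) := by
  refine aux_gauss_integrable _ ?_
  have := (integrable_mul_exp_neg_mul_sq (b := 1) one_pos).const_mul ((Real.sqrt π)⁻¹)
  refine this.congr (Filter.Eventually.of_forall fun x => ?_)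
  show (Real.sqrt π)⁻¹ * (x * Real.exp (-1 * x ^ 2)) = (Real.sqrt π)⁻¹ * Real.exp (-x^2) * x
  ring_nf

lemma aux_gauss_i2 : Integrable (fun x : ℝ => x ^ 2) (gaussianReal 0 (1/2)) := by
  refine aux_gauss_integrable _ ?_
  have h2 := (integrable_rpow_mul_exp_neg_mul_sq (b := 1) one_pos (s := 2) (by norm_num)).const_mul
    ((Real.sqrt π)⁻¹)
  refine h2.congr (Filter.Eventually.of_forall fun x => ?_)
  show (Real.sqrt π)⁻¹ * (x ^ (2:ℝ) * Real.exp (-1 * x ^ 2)) = (Real.sqrt π)⁻¹ * Real.exp (-x^2) * x ^ 2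
  rw [show ((2:ℝ)) = ((2:ℕ):ℝ) by norm_num, Real.rpow_natCast]
  ring_nf

lemma aux_gauss_m1 : ∫ x, x ∂(gaussianReal 0 (1/2)) = 0 := by
  rw [aux_gauss_integral]
  have : ∀ x : ℝ, (Real.sqrt π)⁻¹ * Real.exp (-x^2) * x = (Real.sqrt π)⁻¹ * (x * Real.exp (-x^2)) := by
    intro x; ring
  simp_rw [this, integral_const_mul, aux_integral_id_exp, mul_zero]

lemma aux_gauss_m2 : ∫ x, x ^ 2 ∂(gaussianReal 0 (1/2)) = 1/2 := by
  rw [aux_gauss_integral]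
  have : ∀ x : ℝ, (Real.sqrt π)⁻¹ * Real.exp (-x^2) * x ^ 2 = (Real.sqrt π)⁻¹ * (x ^ 2 * Real.exp (-x^2)) := by
    intro x; ring
  simp_rw [this, integral_const_mul, aux_integral_sq_exp]
  field_simp

lemma aux_phi_meas : Measurable (fun p : ℝ × ℝ => (Complex.equivRealProd.symm p : ℂ)) := by
  simp_rw [Complex.equivRealProd_symm_apply]
  fun_prop

lemma aux_std_prob : IsProbabilityMeasure stdComplexGaussian := by
  rw [stdComplexGaussian]; exact Measure.isProbabilityMeasure_map aux_phi_meas.aemeasurable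

instance : IsProbabilityMeasure stdComplexGaussian := aux_std_prob

lemma aux_int_fst {f : ℝ → ℝ} (hm : Measurable f) (hf : Integrable f (gaussianReal 0 (1/2))) :
    Integrable (fun p : ℝ × ℝ => f p.1)
      ((gaussianReal 0 (1/2)).prod (gaussianReal 0 (1/2))) := by
  have h1 : Integrable f (((gaussianReal 0 (1/2)).prod (gaussianReal 0 (1/2))).map Prod.fst) := by
    rwa [Measure.map_fst_prod, measure_univ, one_smul]
  exact (integrable_map_measure hm.aestronglyMeasurable measurable_fst.aemeasurable).mp h1

lemma aux_int_snd {f : ℝ → ℝ} (hm : Measurable f) (hf : Integrable f (gaussianReal 0 (1/2))) :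
    Integrable (fun p : ℝ × ℝ => f p.2)
      ((gaussianReal 0 (1/2)).prod (gaussianReal 0 (1/2))) := by
  have h1 : Integrable f (((gaussianReal 0 (1/2)).prod (gaussianReal 0 (1/2))).map Prod.snd) := by
    rwa [Measure.map_snd_prod, measure_univ, one_smul]
  exact (integrable_map_measure hm.aestronglyMeasurable measurable_snd.aemeasurable).mp h1

lemma aux_integral_fst {f : ℝ → ℝ} (hm : Measurable f) :
    ∫ p, f p.1 ∂((gaussianReal 0 (1/2)).prod (gaussianReal 0 (1/2))) =
      ∫ x, f x ∂(gaussianReal 0 (1/2)) := by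
  have h := integral_map (μ := (gaussianReal 0 (1/2)).prod (gaussianReal 0 (1/2)))
    measurable_fst.aemeasurable (f := f) hm.aestronglyMeasurable
  rw [Measure.map_fst_prod, measure_univ, one_smul] at h
  exact h.symm

lemma aux_integral_snd {f : ℝ → ℝ} (hm : Measurable f) :
    ∫ p, f p.2 ∂((gaussianReal 0 (1/2)).prod (gaussianReal 0 (1/2))) =
      ∫ x, f x ∂(gaussianReal 0 (1/2)) := by
  have h := integral_map (μ := (gaussianReal 0 (1/2)).prod (gaussianReal 0 (1/2)))
    measurable_snd.aemeasurable (f := f) hm.aestronglyMeasurable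
  rw [Measure.map_snd_prod, measure_univ, one_smul] at h
  exact h.symm

lemma aux_std_i1 : Integrable (fun z : ℂ => z) stdComplexGaussian := by
  rw [stdComplexGaussian]
  refine (integrable_map_measure (g := fun z : ℂ => z) continuous_id'.aestronglyMeasurable
    aux_phi_meas.aemeasurable).mpr ?_
  have h1 : Integrable (fun p : ℝ × ℝ => ((p.1 : ℂ)))
      ((gaussianReal 0 (1/2)).prod (gaussianReal 0 (1/2))) :=
    (aux_int_fst measurable_id aux_gauss_i1).ofReal
  have h2 : Integrable (fun p : ℝ × ℝ => ((p.2 : ℂ)) * Complex.I)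
      ((gaussianReal 0 (1/2)).prod (gaussianReal 0 (1/2))) :=
    ((aux_int_snd measurable_id aux_gauss_i1).ofReal).mul_const _
  refine (h1.add h2).congr (Filter.Eventually.of_forall fun p => ?_)
  simp [Function.comp, Complex.equivRealProd_symm_apply]

lemma aux_std_m1 : ∫ z, z ∂stdComplexGaussian = 0 := by
  rw [stdComplexGaussian,
    integral_map (f := fun z : ℂ => z) aux_phi_meas.aemeasurable
      continuous_id'.aestronglyMeasurable]
  simp_rw [Complex.equivRealProd_symm_apply]
  have h1 : Integrable (fun p : ℝ × ℝ => ((p.1 : ℂ)))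
      ((gaussianReal 0 (1/2)).prod (gaussianReal 0 (1/2))) :=
    (aux_int_fst measurable_id aux_gauss_i1).ofReal
  have h2 : Integrable (fun p : ℝ × ℝ => ((p.2 : ℂ)) * Complex.I)
      ((gaussianReal 0 (1/2)).prod (gaussianReal 0 (1/2))) :=
    ((aux_int_snd measurable_id aux_gauss_i1).ofReal).mul_const _
  have hio1 : ∫ p : ℝ × ℝ, ((p.1 : ℂ)) ∂((gaussianReal 0 (1/2)).prod (gaussianReal 0 (1/2))) =
      ((∫ p : ℝ × ℝ, p.1 ∂((gaussianReal 0 (1/2)).prod (gaussianReal 0 (1/2))) : ℝ) : ℂ) :=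
    integral_ofReal
  have hio2 : ∫ p : ℝ × ℝ, ((p.2 : ℂ)) ∂((gaussianReal 0 (1/2)).prod (gaussianReal 0 (1/2))) =
      ((∫ p : ℝ × ℝ, p.2 ∂((gaussianReal 0 (1/2)).prod (gaussianReal 0 (1/2))) : ℝ) : ℂ) :=
    integral_ofReal
  rw [integral_add h1 h2, integral_mul_const, hio1, hio2]
  have ha : ∫ p : ℝ × ℝ, p.1 ∂((gaussianReal 0 (1/2)).prod (gaussianReal 0 (1/2))) = 0 :=
    (aux_integral_fst (f := fun x : ℝ => x) measurable_id').trans aux_gauss_m1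
  have hb : ∫ p : ℝ × ℝ, p.2 ∂((gaussianReal 0 (1/2)).prod (gaussianReal 0 (1/2))) = 0 :=
    (aux_integral_snd (f := fun x : ℝ => x) measurable_id').trans aux_gauss_m1
  rw [ha, hb]
  simp

lemma aux_mulconj_comp (p : ℝ × ℝ) :
    (Complex.equivRealProd.symm p : ℂ) * (starRingEnd ℂ) (Complex.equivRealProd.symm p) =
      ((p.1 ^ 2 + p.2 ^ 2 : ℝ) : ℂ) := by
  rw [Complex.equivRealProd_symm_apply, Complex.mul_conj]
  norm_num [Complex.normSq_add_mul_I]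

lemma aux_mulconj_meas : Continuous (fun z : ℂ => z * (starRingEnd ℂ) z) :=
  continuous_id.mul Complex.continuous_conj

lemma aux_sumsq_int : Integrable (fun p : ℝ × ℝ => ((p.1 ^ 2 + p.2 ^ 2 : ℝ) : ℂ))
    ((gaussianReal 0 (1/2)).prod (gaussianReal 0 (1/2))) :=
  ((aux_int_fst (by fun_prop) aux_gauss_i2).add (aux_int_snd (by fun_prop) aux_gauss_i2)).ofReal

lemma aux_std_ic : Integrable (fun z : ℂ => z * (starRingEnd ℂ) z) stdComplexGaussian := by
  rw [stdComplexGaussian]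
  rw [integrable_map_measure aux_mulconj_meas.aestronglyMeasurable aux_phi_meas.aemeasurable]
  exact aux_sumsq_int.congr (Filter.Eventually.of_forall fun p => (aux_mulconj_comp p).symm)

lemma aux_std_mc : ∫ z, z * (starRingEnd ℂ) z ∂stdComplexGaussian = 1 := by
  rw [stdComplexGaussian,
    integral_map aux_phi_meas.aemeasurable aux_mulconj_meas.aestronglyMeasurable]
  simp_rw [aux_mulconj_comp]
  have hio : ∫ p : ℝ × ℝ, ((p.1 ^ 2 + p.2 ^ 2 : ℝ) : ℂ)
        ∂((gaussianReal 0 (1/2)).prod (gaussianReal 0 (1/2))) =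
      ((∫ p : ℝ × ℝ, (p.1 ^ 2 + p.2 ^ 2)
        ∂((gaussianReal 0 (1/2)).prod (gaussianReal 0 (1/2))) : ℝ) : ℂ) :=
    integral_ofReal
  rw [hio]
  rw [integral_add (aux_int_fst (by fun_prop) aux_gauss_i2) (aux_int_snd (by fun_prop) aux_gauss_i2)]
  have e1 : ∫ p : ℝ × ℝ, p.1 ^ 2 ∂((gaussianReal 0 (1/2)).prod (gaussianReal 0 (1/2))) =
      ∫ x, x ^ 2 ∂(gaussianReal 0 (1/2)) :=
    aux_integral_fst (f := fun x : ℝ => x ^ 2) (by fun_prop)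
  have e2 : ∫ p : ℝ × ℝ, p.2 ^ 2 ∂((gaussianReal 0 (1/2)).prod (gaussianReal 0 (1/2))) =
      ∫ x, x ^ 2 ∂(gaussianReal 0 (1/2)) :=
    aux_integral_snd (f := fun x : ℝ => x ^ 2) (by fun_prop)
  rw [e1, e2, aux_gauss_m2]
  norm_num

lemma aux_slln {Ω : Type*} [MeasureSpace Ω] [IsProbabilityMeasure (ℙ : Measure Ω)]
    {N : ℕ} (h : Fin N → ℕ → Ω → ℂ)
    (hmeas : ∀ n m, Measurable (h n m))
    (hindep : iIndepFun
      (fun p : Fin N × ℕ => h p.1 p.2) ℙ)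
    (hlaw : ∀ p : Fin N × ℕ, Measure.map (h p.1 p.2) ℙ = stdComplexGaussian)
    (n₁ n₂ : Fin N) :
    ∀ᵐ ω ∂(ℙ : Measure Ω), Filter.Tendsto (fun M : ℕ => (M:ℝ)⁻¹ •
        ∑ m ∈ Finset.range M, h n₁ m ω * (starRingEnd ℂ) (h n₂ m ω)) Filter.atTop
      (𝓝 (if n₁ = n₂ then (1:ℂ) else 0)) := by
  classical
  set X : ℕ → Ω → ℂ := fun m ω => h n₁ m ω * (starRingEnd ℂ) (h n₂ m ω) with hX
  have hmeas' : ∀ p : Fin N × ℕ, Measurable (h p.1 p.2) := fun p => hmeas p.1 p.2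
  have hg : Measurable (fun q : ℂ × ℂ => q.1 * (starRingEnd ℂ) q.2) :=
    measurable_fst.mul (Complex.continuous_conj.measurable.comp measurable_snd)
  have hint1 : ∀ n m, Integrable (h n m) ℙ := by
    intro n m
    exact (integrable_map_measure (g := fun z : ℂ => z) continuous_id'.aestronglyMeasurable
      (hmeas n m).aemeasurable).mp (by rw [hlaw ⟨n, m⟩]; exact aux_std_i1)
  have hconj_int : ∀ n m, Integrable (fun ω => (starRingEnd ℂ) (h n m ω)) ℙ := by
    intro n m
    refine ⟨Complex.continuous_conj.comp_aestronglyMeasurable (hmeas n m).aestronglyMeasurable, ?_⟩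
    have h2 := (hint1 n m).2
    simpa [HasFiniteIntegral, RCLike.nnnorm_conj] using h2
  have hpm : n₁ ≠ n₂ → ∀ k : ℕ, Measure.map (fun ω => (h n₁ k ω, h n₂ k ω)) ℙ =
      stdComplexGaussian.prod stdComplexGaussian := by
    intro hnn k
    have hi : IndepFun (h n₁ k) (h n₂ k) ℙ :=
      hindep.indepFun (i := (n₁, k)) (j := (n₂, k)) (by simp [hnn])
    rw [(indepFun_iff_map_prod_eq_prod_map_map (hmeas n₁ k).aemeasurable
      (hmeas n₂ k).aemeasurable).mp hi, hlaw ⟨n₁, k⟩, hlaw ⟨n₂, k⟩]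
  have hintX0 : Integrable (X 0) ℙ := by
    by_cases hnn : n₁ = n₂
    · subst hnn
      exact (integrable_map_measure aux_mulconj_meas.aestronglyMeasurable
        (hmeas n₁ 0).aemeasurable).mp (by rw [hlaw ⟨n₁, 0⟩]; exact aux_std_ic)
    · have hi : IndepFun (h n₁ 0) (h n₂ 0) ℙ :=
        hindep.indepFun (i := (n₁, 0)) (j := (n₂, 0)) (by simp [hnn])
      have hi' : IndepFun (h n₁ 0) (fun ω => (starRingEnd ℂ) (h n₂ 0 ω)) ℙ :=
        hi.comp measurable_id Complex.continuous_conj.measurable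
      exact hi'.integrable_mul (hint1 n₁ 0) (hconj_int n₂ 0)
  have hpind : Pairwise (Function.onFun (IndepFun · · (ℙ : Measure Ω)) X) := by
    intro m m' hmm
    have := (hindep.indepFun_prodMk_prodMk hmeas' (n₁, m) (n₂, m) (n₁, m') (n₂, m')
      (by simp [hmm]) (by simp [hmm]) (by simp [hmm]) (by simp [hmm])).comp hg hg
    exact this
  have hid : ∀ m, IdentDistrib (X m) (X 0) ℙ ℙ := by
    intro m
    by_cases hnn : n₁ = n₂
    · subst hnn
      have hident : IdentDistrib (h n₁ m) (h n₁ 0) ℙ ℙ :=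
        ⟨(hmeas n₁ m).aemeasurable, (hmeas n₁ 0).aemeasurable,
          by rw [hlaw ⟨n₁, m⟩, hlaw ⟨n₁, 0⟩]⟩
      exact hident.comp aux_mulconj_meas.measurable
    · have hident : IdentDistrib (fun ω => (h n₁ m ω, h n₂ m ω))
          (fun ω => (h n₁ 0 ω, h n₂ 0 ω)) ℙ ℙ :=
        ⟨((hmeas n₁ m).prodMk (hmeas n₂ m)).aemeasurable,
          ((hmeas n₁ 0).prodMk (hmeas n₂ 0)).aemeasurable,
          by rw [hpm hnn m, hpm hnn 0]⟩
      exact hident.comp hg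
  have hmean : (∫ ω, X 0 ω ∂(ℙ : Measure Ω)) = if n₁ = n₂ then (1:ℂ) else 0 := by
    by_cases hnn : n₁ = n₂
    · subst hnn
      rw [if_pos rfl]
      have := integral_map (μ := (ℙ : Measure Ω)) (hmeas n₁ 0).aemeasurable
        (f := fun z : ℂ => z * (starRingEnd ℂ) z) aux_mulconj_meas.aestronglyMeasurable
      rw [hlaw ⟨n₁, 0⟩, aux_std_mc] at this
      exact this.symm
    · rw [if_neg hnn]
      have hmg : AEStronglyMeasurable (fun q : ℂ × ℂ => q.1 * (starRingEnd ℂ) q.2)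
          (Measure.map (fun ω => (h n₁ 0 ω, h n₂ 0 ω)) (ℙ : Measure Ω)) :=
        hg.aestronglyMeasurable
      have hi := integral_map (μ := (ℙ : Measure Ω))
        ((hmeas n₁ 0).prodMk (hmeas n₂ 0)).aemeasurable
        (f := fun q : ℂ × ℂ => q.1 * (starRingEnd ℂ) q.2) hmg
      rw [hpm hnn 0] at hi
      have hprod := integral_prod_mul (L := ℂ) (μ := stdComplexGaussian) (ν := stdComplexGaussian)
        (f := fun z : ℂ => z) (g := fun z : ℂ => (starRingEnd ℂ) z)
      have hconj0 : ∫ z, (starRingEnd ℂ) z ∂stdComplexGaussian = 0 := by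
        rw [integral_conj, aux_std_m1, map_zero]
      rw [hprod, hconj0, mul_zero] at hi
      exact hi.symm
  have hslln := ProbabilityTheory.strong_law_ae X hintX0 hpind hid
  filter_upwards [hslln] with ω hω
  rwa [hmean] at hω

lemma aux_key {N : ℕ} (a : Fin N → ℕ → ℂ) (M : ℕ) :
    ((∑ m ∈ Finset.range M, norm (∑ n : Fin N, a n m) ^ 2 : ℝ) : ℂ) =
      ∑ n₁ : Fin N, ∑ n₂ : Fin N, ∑ m ∈ Finset.range M, a n₁ m * (starRingEnd ℂ) (a n₂ m) := by
  have h1 : ∀ n₁ : Fin N, ∑ n₂ : Fin N, ∑ m ∈ Finset.range M, a n₁ m * (starRingEnd ℂ) (a n₂ m)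
      = ∑ m ∈ Finset.range M, ∑ n₂ : Fin N, a n₁ m * (starRingEnd ℂ) (a n₂ m) :=
    fun n₁ => Finset.sum_comm
  simp_rw [h1]
  rw [Finset.sum_comm]
  push_cast
  refine Finset.sum_congr rfl fun m _ => ?_
  rw [← Finset.sum_mul_sum, ← map_sum, Complex.mul_conj, ← Complex.sq_norm]
  push_cast
  ring

lemma aux_F_eq {N : ℕ} (a : Fin N → ℕ → ℂ) (M : ℕ)
    (hs : 0 < ∑ m ∈ Finset.range M, norm (∑ n : Fin N, a n m) ^ 2) :
    (∑ n₁ : Fin N, norm (∑ m ∈ Finset.range M, a n₁ m *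
        ((∑ n₂ : Fin N, (starRingEnd ℂ) (a n₂ m)) /
          (Real.sqrt (∑ m' ∈ Finset.range M,
            norm (∑ n : Fin N, a n m') ^ 2) : ℝ))) ^ 2) =
      (∑ n₁ : Fin N, norm (∑ n₂ : Fin N,
          ∑ m ∈ Finset.range M, a n₁ m * (starRingEnd ℂ) (a n₂ m)) ^ 2) /
        (∑ m ∈ Finset.range M, norm (∑ n : Fin N, a n m) ^ 2) := by
  set s : ℝ := ∑ m ∈ Finset.range M, norm (∑ n : Fin N, a n m) ^ 2 with hsdef
  have hD : (0:ℝ) < Real.sqrt s := Real.sqrt_pos.mpr hs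
  have hinner : ∀ n₁ : Fin N, (∑ m ∈ Finset.range M, a n₁ m *
      ((∑ n₂ : Fin N, (starRingEnd ℂ) (a n₂ m)) / ((Real.sqrt s : ℝ) : ℂ))) =
      (∑ n₂ : Fin N, ∑ m ∈ Finset.range M, a n₁ m * (starRingEnd ℂ) (a n₂ m)) /
        ((Real.sqrt s : ℝ) : ℂ) := by
    intro n₁
    simp_rw [← mul_div_assoc]
    rw [← Finset.sum_div]
    congr 1
    simp_rw [Finset.mul_sum]
    rw [Finset.sum_comm]
  simp_rw [hinner]
  have habs : ∀ z : ℂ, norm (z / ((Real.sqrt s : ℝ) : ℂ)) ^ 2 = norm z ^ 2 / s := by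
    intro z
    rw [norm_div, Complex.norm_real, Real.norm_eq_abs, abs_of_pos hD, div_pow, Real.sq_sqrt hs.le]
  simp_rw [habs]
  rw [← Finset.sum_div]

/-- Superimposed MF beamforming gain: with w = (∑ₙ hₙ*)/‖∑ₙ hₙ‖ one has
‖H₀w‖² = (∑_{n₁} |∑_{n₂} h_{n₁}ᵀh_{n₂}*|²)/(∑_{n₁,n₂} h_{n₁}ᵀh_{n₂}*), and for i.i.d.
standard complex Gaussian entries, almost surely ‖H₀w‖²/M → 1 as M → ∞. -/
theorem stmt_11 {Ω : Type*} [MeasureSpace Ω] [IsProbabilityMeasure (ℙ : Measure Ω)]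
    (N : ℕ) (hN : 0 < N) (h : Fin N → ℕ → Ω → ℂ)
    (hmeas : ∀ n m, Measurable (h n m))
    (hindep : iIndepFun
      (fun p : Fin N × ℕ => h p.1 p.2) ℙ)
    (hlaw : ∀ p : Fin N × ℕ, Measure.map (h p.1 p.2) ℙ = stdComplexGaussian) :
    (∀ ω : Ω, ∀ M : ℕ,
      Real.sqrt (∑ m ∈ Finset.range M, norm (∑ n : Fin N, h n m ω) ^ 2) ≠ 0 →
      (∑ n₁ : Fin N, norm (∑ m ∈ Finset.range M, h n₁ m ω *
          ((∑ n₂ : Fin N, (starRingEnd ℂ) (h n₂ m ω)) /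
            (Real.sqrt (∑ m' ∈ Finset.range M,
              norm (∑ n : Fin N, h n m' ω) ^ 2) : ℝ))) ^ 2) =
        (∑ n₁ : Fin N, norm (∑ n₂ : Fin N,
            ∑ m ∈ Finset.range M, h n₁ m ω * (starRingEnd ℂ) (h n₂ m ω)) ^ 2) /
          (∑ n₁ : Fin N, ∑ n₂ : Fin N,
            ∑ m ∈ Finset.range M, h n₁ m ω * (starRingEnd ℂ) (h n₂ m ω)).re) ∧
    ∀ᵐ ω ∂(ℙ : Measure Ω),
      Tendsto
        (fun M : ℕ =>
          (∑ n₁ : Fin N, norm (∑ m ∈ Finset.range M, h n₁ m ω *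
              ((∑ n₂ : Fin N, (starRingEnd ℂ) (h n₂ m ω)) /
                (Real.sqrt (∑ m' ∈ Finset.range M,
                  norm (∑ n : Fin N, h n m' ω) ^ 2) : ℝ))) ^ 2) / (M : ℝ))
        atTop (nhds 1) := by
  classical
  constructor
  · intro ω M hsqrt
    have hs0 : 0 ≤ ∑ m ∈ Finset.range M, norm (∑ n : Fin N, h n m ω) ^ 2 :=
      Finset.sum_nonneg fun m _ => sq_nonneg _
    have hspos : 0 < ∑ m ∈ Finset.range M, norm (∑ n : Fin N, h n m ω) ^ 2 := by
      rcases hs0.lt_or_eq with h' | h'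
      · exact h'
      · exact absurd (by rw [← h', Real.sqrt_zero]) hsqrt
    rw [aux_F_eq (fun n m => h n m ω) M hspos]
    congr 1
    rw [← aux_key (fun n m => h n m ω) M, Complex.ofReal_re]
  · have hslln : ∀ pr : Fin N × Fin N, ∀ᵐ ω ∂(ℙ : Measure Ω),
        Filter.Tendsto (fun M : ℕ => (M:ℝ)⁻¹ •
          ∑ m ∈ Finset.range M, h pr.1 m ω * (starRingEnd ℂ) (h pr.2 m ω)) Filter.atTop
        (𝓝 (if pr.1 = pr.2 then (1:ℂ) else 0)) :=
      fun pr => aux_slln h hmeas hindep hlaw pr.1 pr.2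
    have hae := (MeasureTheory.ae_all_iff).mpr hslln
    filter_upwards [hae] with ω hT
    have hT' : ∀ n₁ n₂ : Fin N, Filter.Tendsto (fun M : ℕ => (M:ℝ)⁻¹ •
        ∑ m ∈ Finset.range M, h n₁ m ω * (starRingEnd ℂ) (h n₂ m ω)) Filter.atTop
        (𝓝 (if n₁ = n₂ then (1:ℂ) else 0)) := fun n₁ n₂ => hT (n₁, n₂)
    have hNpos : (0:ℝ) < N := by exact_mod_cast hN
    have hNne : (N:ℝ) ≠ 0 := ne_of_gt hNpos
    have hB : ∀ n₁ : Fin N, Filter.Tendsto (fun M : ℕ => ∑ n₂ : Fin N, (M:ℝ)⁻¹ •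
        ∑ m ∈ Finset.range M, h n₁ m ω * (starRingEnd ℂ) (h n₂ m ω)) Filter.atTop (𝓝 1) := by
      intro n₁
      have := tendsto_finset_sum Finset.univ (fun n₂ _ => hT' n₁ n₂)
      simpa using this
    have hnum : Filter.Tendsto (fun M : ℕ => ∑ n₁ : Fin N,
        norm (∑ n₂ : Fin N, (M:ℝ)⁻¹ •
          ∑ m ∈ Finset.range M, h n₁ m ω * (starRingEnd ℂ) (h n₂ m ω)) ^ 2)
        Filter.atTop (𝓝 (N:ℝ)) := by
      have h1 : ∀ n₁ : Fin N, Filter.Tendsto (fun M : ℕ =>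
          norm (∑ n₂ : Fin N, (M:ℝ)⁻¹ •
            ∑ m ∈ Finset.range M, h n₁ m ω * (starRingEnd ℂ) (h n₂ m ω)) ^ 2)
          Filter.atTop (𝓝 1) := by
        intro n₁
        have h2 := ((continuous_norm.tendsto (1:ℂ)).comp (hB n₁)).pow 2
        simpa using h2
      have := tendsto_finset_sum (Finset.univ : Finset (Fin N)) (fun n₁ _ => h1 n₁)
      simpa using this
    have hdenC : Filter.Tendsto (fun M : ℕ => ∑ n₁ : Fin N, ∑ n₂ : Fin N, (M:ℝ)⁻¹ •
        ∑ m ∈ Finset.range M, h n₁ m ω * (starRingEnd ℂ) (h n₂ m ω))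
        Filter.atTop (𝓝 (N:ℂ)) := by
      have h1 : ∀ n₁ : Fin N, Filter.Tendsto (fun M : ℕ => ∑ n₂ : Fin N, (M:ℝ)⁻¹ •
          ∑ m ∈ Finset.range M, h n₁ m ω * (starRingEnd ℂ) (h n₂ m ω))
          Filter.atTop (𝓝 1) := hB
      have := tendsto_finset_sum (Finset.univ : Finset (Fin N)) (fun n₁ _ => h1 n₁)
      simpa using this
    have hden : Filter.Tendsto (fun M : ℕ => (∑ n₁ : Fin N, ∑ n₂ : Fin N, (M:ℝ)⁻¹ •
        ∑ m ∈ Finset.range M, h n₁ m ω * (starRingEnd ℂ) (h n₂ m ω)).re)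
        Filter.atTop (𝓝 (N:ℝ)) := by
      have h2 := (Complex.continuous_re.tendsto (N:ℂ)).comp hdenC
      rw [Complex.natCast_re] at h2
      exact h2
    have hlim : Filter.Tendsto (fun M : ℕ => (∑ n₁ : Fin N,
        norm (∑ n₂ : Fin N, (M:ℝ)⁻¹ •
          ∑ m ∈ Finset.range M, h n₁ m ω * (starRingEnd ℂ) (h n₂ m ω)) ^ 2) /
        (∑ n₁ : Fin N, ∑ n₂ : Fin N, (M:ℝ)⁻¹ •
          ∑ m ∈ Finset.range M, h n₁ m ω * (starRingEnd ℂ) (h n₂ m ω)).re)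
        Filter.atTop (𝓝 1) := by
      have := hnum.div hden hNne
      rwa [div_self hNne] at this
    refine Filter.Tendsto.congr' ?_ hlim
    have hev : ∀ᶠ M : ℕ in Filter.atTop, 0 < (∑ n₁ : Fin N, ∑ n₂ : Fin N, (M:ℝ)⁻¹ •
        ∑ m ∈ Finset.range M, h n₁ m ω * (starRingEnd ℂ) (h n₂ m ω)).re :=
      hden.eventually (eventually_gt_nhds hNpos)
    filter_upwards [hev] with M hdpos
    have hden_eq : (∑ n₁ : Fin N, ∑ n₂ : Fin N, (M:ℝ)⁻¹ •
        ∑ m ∈ Finset.range M, h n₁ m ω * (starRingEnd ℂ) (h n₂ m ω)).re =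
        (M:ℝ)⁻¹ * (∑ m ∈ Finset.range M, norm (∑ n : Fin N, h n m ω) ^ 2) := by
      simp only [← Finset.smul_sum]
      rw [← aux_key (fun n m => h n m ω) M, Complex.real_smul, ← Complex.ofReal_mul,
        Complex.ofReal_re]
    rw [hden_eq] at hdpos
    have hMne : (M:ℝ) ≠ 0 := by
      intro h0
      rw [h0, inv_zero, zero_mul] at hdpos
      exact lt_irrefl _ hdpos
    have hMpos : (0:ℝ) < M := lt_of_le_of_ne (Nat.cast_nonneg M) (Ne.symm hMne)
    have hspos : 0 < ∑ m ∈ Finset.range M, norm (∑ n : Fin N, h n m ω) ^ 2 := by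
      have := mul_pos hMpos hdpos
      rwa [← mul_assoc, mul_inv_cancel₀ hMne, one_mul] at this
    rw [hden_eq, aux_F_eq (fun n m => h n m ω) M hspos]
    have hnum_eq : (∑ n₁ : Fin N, norm (∑ n₂ : Fin N, (M:ℝ)⁻¹ •
        ∑ m ∈ Finset.range M, h n₁ m ω * (starRingEnd ℂ) (h n₂ m ω)) ^ 2) =
        ((M:ℝ)⁻¹) ^ 2 * ∑ n₁ : Fin N, norm (∑ n₂ : Fin N,
          ∑ m ∈ Finset.range M, h n₁ m ω * (starRingEnd ℂ) (h n₂ m ω)) ^ 2 := by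
      rw [Finset.mul_sum]
      refine Finset.sum_congr rfl fun n₁ _ => ?_
      rw [← Finset.smul_sum, Complex.real_smul, norm_mul, Complex.norm_real, Real.norm_eq_abs,
        abs_of_nonneg (inv_nonneg.mpr (Nat.cast_nonneg M)), mul_pow]
    rw [hnum_eq]
    field_simp
end

section
/- Fix P ∈ (0,1), σ² > 0, N ≥ 1, and means μ_{K} parametrized by the group number K via f_K(t, b) = exp(t b − (μ_K − N K σ²)t/(1+σ²t)) / (1+σ²t)^{NK} with μ_{K₂} − N K₂ σ² = μ_{K₁} − N K₁ σ² (time-orthogonal case, equation (59)) and K₁ < K₂. Let b_K be the unique solution in (0, μ_K) of min_{t>0} f_K(t, b) = P. Then b_{K₂} > b_{K₁}. -/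
set_option maxHeartbeats 1000000


open Real Set

/-- G-STBC monotonicity (equation (61)): with fixed noncentrality
μ_K − NKσ² (time-orthogonal case) and K₁ < K₂, the Chernoff thresholds defined by
min_{t>0} f_K(t,b) = P with b ∈ (0, μ_K) satisfy b_{K₂} > b_{K₁}. -/
theorem stmt_18 (N : ℕ) (hN : 1 ≤ N) (σ2 : ℝ) (hσ : 0 < σ2) (P : ℝ)
    (hP : P ∈ Set.Ioo (0 : ℝ) 1) (K1 K2 : ℕ) (hK1 : 1 ≤ K1) (hK : K1 < K2)
    (μ1 μ2 b1 b2 : ℝ)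
    (hμ1 : (N : ℝ) * (K1 : ℝ) * σ2 < μ1) (hμ2 : (N : ℝ) * (K2 : ℝ) * σ2 < μ2)
    (hnc : μ2 - (N : ℝ) * (K2 : ℝ) * σ2 = μ1 - (N : ℝ) * (K1 : ℝ) * σ2)
    (hb1 : b1 ∈ Set.Ioo 0 μ1) (hb2 : b2 ∈ Set.Ioo 0 μ2)
    (h1 : sInf ((fun t : ℝ =>
        Real.exp (t * b1 - (μ1 - (N : ℝ) * (K1 : ℝ) * σ2) * t / (1 + σ2 * t)) /
          (1 + σ2 * t) ^ (N * K1)) '' Set.Ioi 0) = P)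
    (h2 : sInf ((fun t : ℝ =>
        Real.exp (t * b2 - (μ2 - (N : ℝ) * (K2 : ℝ) * σ2) * t / (1 + σ2 * t)) /
          (1 + σ2 * t) ^ (N * K2)) '' Set.Ioi 0) = P) :
    b1 < b2 := by
  obtain ⟨hP0, hP1⟩ := hP
  obtain ⟨hb1pos, hb1lt⟩ := hb1
  obtain ⟨hb2pos, hb2lt⟩ := hb2
  by_contra hcon
  push_neg at hcon
  set J : ℝ := μ1 - (N : ℝ) * (K1 : ℝ) * σ2 with hJ
  have hJpos : 0 < J := by dsimp [J]; linarith
  rw [hnc] at h2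
  have hNK1 : (0:ℝ) < (N:ℝ) * (K1:ℝ) * σ2 := by
    have hN' : (0:ℝ) < (N:ℝ) := by exact_mod_cast Nat.lt_of_lt_of_le Nat.zero_lt_one hN
    have hK' : (0:ℝ) < (K1:ℝ) := by exact_mod_cast Nat.lt_of_lt_of_le Nat.zero_lt_one hK1
    positivity
  set C : ℝ := J + (N : ℝ) * (K1 : ℝ) * σ2 with hC
  have hCpos : 0 < C := by dsimp [C]; linarith
  set q : ℝ := (1 + P) / 2 with hqdef
  have hq0 : 0 < q := by dsimp [q]; linarith
  have hq1 : q < 1 := by dsimp [q]; linarith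
  have hqP : P < q := by dsimp [q]; linarith
  set δ : ℝ := -(Real.log q) / C with hδdef
  have hδpos : 0 < δ := div_pos (neg_pos.mpr (Real.log_neg hq0 hq1)) hCpos
  set ε : ℝ := min ((1 - P) / 2) (P * σ2 * δ / 2) with hεdef
  have hεpos : 0 < ε := lt_min (by linarith) (by positivity)
  have hPεq : P + ε ≤ q := by
    have := min_le_left ((1 - P) / 2) (P * σ2 * δ / 2)
    dsimp [q]; linarith
  have hεlt : ε < P * σ2 * δ := by
    have h := min_le_right ((1 - P) / 2) (P * σ2 * δ / 2)
    have : 0 < P * σ2 * δ := by positivity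
    linarith
  -- nonemptiness and lower bound of images
  have hne1 : ((fun t : ℝ =>
      Real.exp (t * b1 - J * t / (1 + σ2 * t)) / (1 + σ2 * t) ^ (N * K1)) ''
        Set.Ioi 0).Nonempty :=
    ⟨_, Set.mem_image_of_mem _ (by norm_num : (1:ℝ) ∈ Set.Ioi 0)⟩
  have hlt : sInf ((fun t : ℝ =>
      Real.exp (t * b1 - J * t / (1 + σ2 * t)) / (1 + σ2 * t) ^ (N * K1)) ''
        Set.Ioi 0) < P + ε := by rw [h1]; linarith
  obtain ⟨y, hy, hylt⟩ := exists_lt_of_csInf_lt hne1 hlt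
  obtain ⟨t0, ht0, rfl⟩ := hy
  rw [Set.mem_Ioi] at ht0
  have hupos : 0 < 1 + σ2 * t0 := by nlinarith
  have hu1 : 1 < 1 + σ2 * t0 := by nlinarith
  -- lower bound f1(t0) ≥ exp(-C t0)
  have hlow : Real.exp (-(C * t0)) ≤
      Real.exp (t0 * b1 - J * t0 / (1 + σ2 * t0)) / (1 + σ2 * t0) ^ (N * K1) := by
    have hnum : Real.exp (-(J * t0)) ≤ Real.exp (t0 * b1 - J * t0 / (1 + σ2 * t0)) := by
      apply Real.exp_le_exp.mpr
      have hdiv : J * t0 / (1 + σ2 * t0) ≤ J * t0 :=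
        div_le_self (by positivity) (by linarith)
      nlinarith
    have hden : (1 + σ2 * t0) ^ (N * K1) ≤ Real.exp ((N * K1 : ℕ) * (σ2 * t0)) := by
      rw [Real.exp_nat_mul]
      exact pow_le_pow_left₀ (by positivity) (by linarith [Real.add_one_le_exp (σ2 * t0)]) _
    calc Real.exp (-(C * t0)) = Real.exp (-(J * t0)) / Real.exp ((N * K1 : ℕ) * (σ2 * t0)) := by
          rw [← Real.exp_sub]
          congr 1
          push_cast
          dsimp [C]
          ring
      _ ≤ _ := div_le_div₀ (Real.exp_pos _).le hnum (by positivity) hden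
  have ht0δ : δ < t0 := by
    have h1' : Real.exp (-(C * t0)) < q := lt_of_le_of_lt hlow (lt_of_lt_of_le hylt hPεq)
    have h2' : -(C * t0) < Real.log q := by
      have := Real.log_lt_log (Real.exp_pos _) h1'
      rwa [Real.log_exp] at this
    rw [hδdef, div_lt_iff₀ hCpos]
    nlinarith
  -- bound f2(t0, b2) < P
  have hBB : 1 + σ2 * δ ≤ (1 + σ2 * t0) ^ (N * K2 - N * K1) := by
    have hexp1 : 1 ≤ N * K2 - N * K1 := by
      have : N * K1 + 1 ≤ N * K2 := by
        calc N * K1 + 1 ≤ N * K1 + N := by omega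
          _ = N * (K1 + 1) := by ring
          _ ≤ N * K2 := Nat.mul_le_mul_left N (by omega)
      omega
    calc (1:ℝ) + σ2 * δ ≤ 1 + σ2 * t0 := by nlinarith
      _ = (1 + σ2 * t0) ^ 1 := (pow_one _).symm
      _ ≤ (1 + σ2 * t0) ^ (N * K2 - N * K1) := pow_le_pow_right₀ (le_of_lt hu1) hexp1
  have hsplit : (1 + σ2 * t0) ^ (N * K2)
      = (1 + σ2 * t0) ^ (N * K1) * (1 + σ2 * t0) ^ (N * K2 - N * K1) := by
    rw [← pow_add]
    congr 1
    have : N * K1 ≤ N * K2 := Nat.mul_le_mul_left N (le_of_lt hK)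
    omega
  have hf2 : Real.exp (t0 * b2 - J * t0 / (1 + σ2 * t0)) / (1 + σ2 * t0) ^ (N * K2) < P := by
    have hnum2 : Real.exp (t0 * b2 - J * t0 / (1 + σ2 * t0)) ≤
        Real.exp (t0 * b1 - J * t0 / (1 + σ2 * t0)) := by
      apply Real.exp_le_exp.mpr
      nlinarith
    have hpos1 : (0:ℝ) < (1 + σ2 * t0) ^ (N * K1) := by positivity
    have hpos2 : (0:ℝ) < (1 + σ2 * t0) ^ (N * K2 - N * K1) := by positivity
    have hδ1 : (0:ℝ) < 1 + σ2 * δ := by positivity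
    calc Real.exp (t0 * b2 - J * t0 / (1 + σ2 * t0)) / (1 + σ2 * t0) ^ (N * K2)
        = (Real.exp (t0 * b2 - J * t0 / (1 + σ2 * t0)) / (1 + σ2 * t0) ^ (N * K1)) /
            (1 + σ2 * t0) ^ (N * K2 - N * K1) := by
          rw [hsplit, div_div]
      _ ≤ (Real.exp (t0 * b1 - J * t0 / (1 + σ2 * t0)) / (1 + σ2 * t0) ^ (N * K1)) /
            (1 + σ2 * δ) :=
          div_le_div₀ (by positivity) ((div_le_div_iff_of_pos_right hpos1).mpr hnum2) hδ1 hBB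
      _ < (P + ε) / (1 + σ2 * δ) := (div_lt_div_iff_of_pos_right hδ1).mpr hylt
      _ < P := by
          rw [div_lt_iff₀ hδ1]
          nlinarith
  -- conclude
  have hbdd : BddBelow ((fun t : ℝ =>
      Real.exp (t * b2 - J * t / (1 + σ2 * t)) / (1 + σ2 * t) ^ (N * K2)) '' Set.Ioi 0) := by
    refine ⟨0, fun y hy => ?_⟩
    obtain ⟨t, ht, rfl⟩ := hy
    rw [Set.mem_Ioi] at ht
    have : (0:ℝ) < 1 + σ2 * t := by nlinarith
    positivity
  have hle : sInf ((fun t : ℝ =>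
      Real.exp (t * b2 - J * t / (1 + σ2 * t)) / (1 + σ2 * t) ^ (N * K2)) '' Set.Ioi 0)
      ≤ Real.exp (t0 * b2 - J * t0 / (1 + σ2 * t0)) / (1 + σ2 * t0) ^ (N * K2) :=
    csInf_le hbdd (Set.mem_image_of_mem _ (Set.mem_Ioi.mpr ht0))
  rw [h2] at hle
  linarith
end
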